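/- arXiv:2301.01872 — 6 statements merged into one kernel-verified Lean document; each statement's English description precedes it below -/
import Mathlib

section
/- Let G be a finite nonabelian group such that [G,G] ≤ Z(G) and every proper quotient of G is abelian. Then [G,G] is cyclic of prime order. -/
/-!
Since `[G,G]` is central, every subgroup of it is normal. Pick `g ∈ [G,G]` of prime order: the
quotient by `⟨g⟩` is abelian, so `[G,G] ≤ ⟨g⟩`, i.e. `[G,G] = ⟨g⟩` has prime order.
-/

namespace Subgroup

variable {G : Type*} [Group G]

theorem normal_of_le_center {H : Subgroup G} (h : H ≤ center G) : H.Normal :=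
  commutator_top_left_le_iff.mp <|
    (commutator_top_left_eq_bot_iff_le_center.mpr h).le.trans bot_le

theorem exists_mem_prime_orderOf {H : Subgroup G} [Finite H] (hH : H ≠ ⊥) :
    ∃ g ∈ H, (orderOf g).Prime := by
  obtain ⟨p, hp, hpH⟩ := Nat.exists_prime_and_dvd (H.one_lt_card_iff_ne_bot.mpr hH).ne'
  have : Fact p.Prime := ⟨hp⟩
  obtain ⟨x, hx⟩ := exists_prime_orderOf_dvd_card' p hpH
  exact ⟨x, x.2, (orderOf_coe x).symm ▸ hx ▸ hp⟩

end Subgroup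

section

variable {G : Type*} [Group G]

theorem commutator_ne_bot_of_exists_mul_ne (h : ∃ a b : G, a * b ≠ b * a) :
    commutator G ≠ ⊥ := by
  obtain ⟨a, b, hab⟩ := h
  rw [Ne, commutator_eq_bot_iff]
  exact fun h => hab (h.is_comm.comm a b)

theorem commutator_le_of_forall_mul_comm_quotient (N : Subgroup G) [N.Normal]
    (h : ∀ a b : G ⧸ N, a * b = b * a) : commutator G ≤ N := by
  let : CommGroup (G ⧸ N) := { mul_comm := h }
  simpa using Abelianization.commutator_subset_ker (QuotientGroup.mk' N)

end

theorem stmt_1 {G : Type*} [Group G] [Finite G]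
    (hna : ∃ a b : G, a * b ≠ b * a)
    (h3 : commutator G ≤ Subgroup.center G)
    (hq : ∀ (N : Subgroup G) [N.Normal], N ≠ ⊥ → ∀ a b : G ⧸ N, a * b = b * a) :
    IsCyclic ↥(commutator G) ∧ (Nat.card ↥(commutator G)).Prime := by
  obtain ⟨g, hg, hg_prime⟩ :=
    Subgroup.exists_mem_prime_orderOf (commutator_ne_bot_of_exists_mul_ne hna)
  have : (Subgroup.zpowers g).Normal :=
    Subgroup.normal_of_le_center (Subgroup.zpowers_le.mpr (h3 hg))
  have hg_ne : Subgroup.zpowers g ≠ ⊥ :=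
    fun h => hg_prime.ne_one (orderOf_eq_one_iff.mpr (Subgroup.zpowers_eq_bot.mp h))
  have heq : commutator G = Subgroup.zpowers g :=
    le_antisymm (commutator_le_of_forall_mul_comm_quotient _ (hq _ hg_ne))
      (Subgroup.zpowers_le.mpr hg)
  rw [heq, Nat.card_zpowers]
  exact ⟨inferInstance, hg_prime⟩
end

section
/- Let G be a finite nonabelian group such that [G,G] ≤ Z(G) and every proper quotient of G is abelian. Then the center Z(G) is cyclic of prime power order, for the same prime p such that [G,G] has order p. -/
/-!
Every nontrivial subgroup `N` of `Z(G)` is normal, so `G ⧸ N` is abelian and `[G, G] ≤ N`. Thus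
in the abelian group `Z(G)` every nontrivial subgroup contains `C = [G, G]`, of prime order `p`.
The order of every nontrivial element is then divisible by `p`, so `Z(G)` is a `p`-group, and every
solution of `a ^ p = 1` lies in `C`. As the `p`-th power map sends the solutions of `a ^ (p * m) = 1`
to those of `a ^ m = 1` with fibres of size at most `p`, the equation `a ^ n = 1` has at most `n`
solutions for every `n`, which forces `Z(G)` to be cyclic.
-/

open Subgroup

theorem Subgroup.card_comap_le_card_ker_mul {G G' : Type*} [Group G] [Group G'] [Finite G]
    (f : G →* G') (H : Subgroup G') [Finite H] :
    Nat.card (H.comap f) ≤ Nat.card f.ker * Nat.card H := by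
  set g := f.domRestrict (H.comap f)
  have hker : Nat.card g.ker ≤ Nat.card f.ker := by
    rw [MonoidHom.ker_domRestrict]
    exact Nat.le_of_dvd Nat.card_pos (card_comap_dvd_of_injective _ _ (subtype_injective _))
  have hrange : Nat.card g.range ≤ Nat.card H := by
    rw [MonoidHom.domRestrict_range]
    exact card_le_of_le (map_comap_le f H)
  calc Nat.card (H.comap f) = Nat.card g.ker * Nat.card g.range := by
        rw [← index_ker, card_mul_index]
    _ ≤ Nat.card f.ker * Nat.card H := Nat.mul_le_mul hker hrange

theorem Subgroup.normal_of_le_center_s2 {G : Type*} [Group G] {N : Subgroup G}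
    (h : N ≤ center G) : N.Normal :=
  ⟨fun n hn g => by rwa [mem_center_iff.mp (h hn) g, mul_inv_cancel_right]⟩

theorem commutator_le_of_forall_quotient_comm {G : Type*} [Group G]
    (hq : ∀ (N : Subgroup G) [N.Normal], N ≠ ⊥ → ∀ a b : G ⧸ N, a * b = b * a)
    {N : Subgroup G} [N.Normal] (hN : N ≠ ⊥) : commutator G ≤ N :=
  Normal.quotient_commutative_iff_commutator_le.mp (isMulCommutative_iff.mpr (hq N hN))

section MinimalSubgroup

variable {A : Type*} {p : ℕ}

section Group

variable [Group A] {C : Subgroup A}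

theorem card_dvd_orderOf_of_forall_ne_bot_le (hle : ∀ H : Subgroup A, H ≠ ⊥ → C ≤ H)
    {a : A} (ha : a ≠ 1) : Nat.card C ∣ orderOf a := by
  rw [← Nat.card_zpowers]
  exact card_dvd_of_le (hle _ (zpowers_eq_bot.not.mpr ha))

theorem card_eq_prime_pow_of_forall_ne_bot_le [Finite A] (hp : p.Prime)
    (hC : Nat.card C = p) (hle : ∀ H : Subgroup A, H ≠ ⊥ → C ≤ H) :
    ∃ j : ℕ, Nat.card A = p ^ j := by
  refine ⟨_, Nat.eq_prime_pow_of_unique_prime_dvd Nat.card_pos.ne' fun {q} hq hqA => ?_⟩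
  have := Fact.mk hq
  obtain ⟨a, ha⟩ := exists_prime_orderOf_dvd_card' q hqA
  have ha1 : a ≠ 1 := by rintro rfl; simp [hq.ne_one.symm] at ha
  have := card_dvd_orderOf_of_forall_ne_bot_le hle ha1
  rw [hC, ha] at this
  exact ((Nat.prime_dvd_prime_iff_eq hp hq).mp this).symm

end Group

variable [CommGroup A] {C : Subgroup A}

theorem ker_powMonoidHom_eq_bot_of_forall_ne_bot_le (hle : ∀ H : Subgroup A, H ≠ ⊥ → C ≤ H)
    {n : ℕ} (hn : ¬ Nat.card C ∣ n) : (powMonoidHom n : A →* A).ker = ⊥ := by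
  refine (eq_bot_iff_forall _).mpr fun a ha => by_contra fun ha1 => hn ?_
  exact (card_dvd_orderOf_of_forall_ne_bot_le hle ha1).trans (orderOf_dvd_of_pow_eq_one ha)

theorem ker_powMonoidHom_le_of_forall_ne_bot_le [Finite A] (hC : Nat.card C = p)
    (hle : ∀ H : Subgroup A, H ≠ ⊥ → C ≤ H) : (powMonoidHom p : A →* A).ker ≤ C := by
  intro a ha
  rcases eq_or_ne a 1 with rfl | ha1
  · exact C.one_mem
  have hord : orderOf a = p := Nat.dvd_antisymm (orderOf_dvd_of_pow_eq_one ha)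
    (hC ▸ card_dvd_orderOf_of_forall_ne_bot_le hle ha1)
  have hCa := hle _ (zpowers_eq_bot.not.mpr ha1)
  rw [eq_of_le_of_card_ge hCa (by rw [Nat.card_zpowers, hord, hC])]
  exact mem_zpowers a

theorem card_ker_powMonoidHom_le_of_forall_ne_bot_le [Finite A] (hp : p.Prime)
    (hC : Nat.card C = p) (hle : ∀ H : Subgroup A, H ≠ ⊥ → C ≤ H) :
    ∀ n : ℕ, 0 < n → Nat.card (powMonoidHom n : A →* A).ker ≤ n := by
  intro n
  induction n using Nat.strong_induction_on with
  | _ n ih =>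
  intro hn
  by_cases hpn : p ∣ n
  · obtain ⟨m, rfl⟩ := hpn
    have hm : 0 < m := Nat.pos_of_mul_pos_left hn
    have hcomap : (powMonoidHom (p * m) : A →* A).ker =
        ((powMonoidHom m).ker).comap (powMonoidHom p) := by
      ext a; simp [pow_mul]
    calc Nat.card (powMonoidHom (p * m) : A →* A).ker
        ≤ Nat.card (powMonoidHom p : A →* A).ker * Nat.card (powMonoidHom m : A →* A).ker := by
          rw [hcomap]; exact card_comap_le_card_ker_mul _ _
      _ ≤ p * m := Nat.mul_le_mul
          ((card_le_of_le (ker_powMonoidHom_le_of_forall_ne_bot_le hC hle)).trans hC.le)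
          (ih m (lt_mul_left hm hp.one_lt) hm)
  · rw [ker_powMonoidHom_eq_bot_of_forall_ne_bot_le hle (hC ▸ hpn), card_bot]
    exact hn

theorem isCyclic_of_forall_ne_bot_le [Finite A] (hp : p.Prime) (hC : Nat.card C = p)
    (hle : ∀ H : Subgroup A, H ≠ ⊥ → C ≤ H) : IsCyclic A := by
  classical
  have := Fintype.ofFinite A
  refine isCyclic_of_card_pow_eq_one_le fun n hn => ?_
  have := card_ker_powMonoidHom_le_of_forall_ne_bot_le hp hC hle n hn
  simpa only [Nat.card_eq_fintype_card, Fintype.card_subtype, MonoidHom.mem_ker,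
    powMonoidHom_apply] using this

end MinimalSubgroup

theorem stmt_2_general {G : Type*} [Group G] [Finite G]
    (h3 : commutator G ≤ Subgroup.center G)
    (hq : ∀ (N : Subgroup G) [N.Normal], N ≠ ⊥ → ∀ a b : G ⧸ N, a * b = b * a)
    (p : ℕ) (hp : p.Prime) (hcard : Nat.card ↥(commutator G) = p) :
    IsCyclic ↥(Subgroup.center G) ∧ ∃ j : ℕ, Nat.card ↥(Subgroup.center G) = p ^ j := by
  let : CommGroup (center G) := { (center G).toGroup with mul_comm := mul_comm' }
  set C := (commutator G).subgroupOf (center G)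
  have hC : Nat.card C = p := (Nat.card_congr (subgroupOfEquivOfLe h3).toEquiv).trans hcard
  have hle : ∀ H : Subgroup (center G), H ≠ ⊥ → C ≤ H := by
    intro H hH
    have := normal_of_le_center_s2 (map_subtype_le H)
    have hmap := commutator_le_of_forall_quotient_comm hq
      ((map_eq_bot_iff_of_injective H (subtype_injective _)).not.mpr hH)
    rwa [← map_le_map_iff_of_injective (subtype_injective (center G)), subgroupOf_map_subtype,
      inf_of_le_left h3]
  exact ⟨isCyclic_of_forall_ne_bot_le hp hC hle, card_eq_prime_pow_of_forall_ne_bot_le hp hC hle⟩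

theorem stmt_2 {G : Type*} [Group G] [Finite G]
    (hna : ∃ a b : G, a * b ≠ b * a)
    (h3 : commutator G ≤ Subgroup.center G)
    (hq : ∀ (N : Subgroup G) [N.Normal], N ≠ ⊥ → ∀ a b : G ⧸ N, a * b = b * a)
    (p : ℕ) (hp : p.Prime) (hcard : Nat.card ↥(commutator G) = p) :
    IsCyclic ↥(Subgroup.center G) ∧ ∃ j : ℕ, Nat.card ↥(Subgroup.center G) = p ^ j :=
  stmt_2_general h3 hq p hp hcard
end

section
/- Let G be a finite nonabelian group such that [G,G] ≤ Z(G) and every proper quotient of G is abelian, and let p be the order of [G,G] (a prime). Then G/Z(G) has exponent p, i.e. x^p ∈ Z(G) for all x ∈ G. -/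
open scoped commutatorElement

theorem commutatorElement_pow_left {G : Type*} [Group G] {x g : G} (h : Commute x ⁅x, g⁆)
    (n : ℕ) : ⁅x ^ n, g⁆ = ⁅x, g⁆ ^ n := by
  induction n with
  | zero => simp
  | succ n ih =>
    calc ⁅x ^ (n + 1), g⁆ = x * ⁅x ^ n, g⁆ * x⁻¹ * ⁅x, g⁆ := by
          simp only [commutatorElement_def]; group
      _ = ⁅x, g⁆ ^ (n + 1) := by
          rw [ih, (h.pow_right n).eq, pow_succ]; group

theorem pow_card_commutator_mem_center {G : Type*} [Group G]
    (h : commutator G ≤ Subgroup.center G) (x : G) :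
    x ^ Nat.card (commutator G) ∈ Subgroup.center G := by
  rw [Subgroup.mem_center_iff]
  intro g
  have hmem : ⁅x, g⁆ ∈ commutator G :=
    Subgroup.commutator_mem_commutator (Subgroup.mem_top x) (Subgroup.mem_top g)
  have hcomm : Commute x ⁅x, g⁆ := Subgroup.mem_center_iff.mp (h hmem) x
  have hpow : ⁅x, g⁆ ^ Nat.card (commutator G) = 1 := by
    simpa only [Subgroup.coe_pow, OneMemClass.coe_one] using
      congrArg Subtype.val (pow_card_eq_one' (x := (⟨⁅x, g⁆, hmem⟩ : commutator G)))
  rw [← commutatorElement_pow_left hcomm, commutatorElement_eq_one_iff_mul_comm] at hpow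
  exact hpow.symm

theorem stmt_3_general {G : Type*} [Group G]
    (h3 : commutator G ≤ Subgroup.center G)
    (p : ℕ) (hcard : Nat.card ↥(commutator G) = p) :
    ∀ x : G, x ^ p ∈ Subgroup.center G :=
  hcard ▸ pow_card_commutator_mem_center h3

theorem stmt_3 {G : Type*} [Group G] [Finite G]
    (hna : ∃ a b : G, a * b ≠ b * a)
    (h3 : commutator G ≤ Subgroup.center G)
    (hq : ∀ (N : Subgroup G) [N.Normal], N ≠ ⊥ → ∀ a b : G ⧸ N, a * b = b * a)
    (p : ℕ) (hp : p.Prime) (hcard : Nat.card ↥(commutator G) = p) :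
    ∀ x : G, x ^ p ∈ Subgroup.center G :=
  stmt_3_general h3 p hcard
end

section
/- Let p be a prime, j ≥ 1, and define N(p^j) by the presentation ⟨z, a, b | [z,a]=[z,b]=1, [a,b]=z^{p^{j-1}}, z^{p^j}=1, a^p=b^p=z⟩. Then N(p^j) contains an element of order p^{j+1}. -/
inductive NGen | z | a | b

open FreeGroup commutatorElement in
def Nrels (p j : ℕ) : Set (FreeGroup NGen) :=
  { ⁅of NGen.z, of NGen.a⁆, ⁅of NGen.z, of NGen.b⁆,
    ⁅of NGen.a, of NGen.b⁆ * (of NGen.z ^ (p ^ (j - 1)))⁻¹,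
    of NGen.z ^ (p ^ j),
    of NGen.a ^ p * (of NGen.z)⁻¹, of NGen.b ^ p * (of NGen.z)⁻¹ }

/-- The group N(p^j). -/
abbrev Ngroup (p j : ℕ) := PresentedGroup (Nrels p j)

/-!
The relations `a ^ p = z` and `z ^ p ^ j = 1` give `a ^ p ^ (j + 1) = 1`, so it suffices to find
a group in which the relations hold and the image of `a` has order `p ^ (j + 1)`.

In `R = ZMod (p ^ (j + 1))` take the affine permutations `a ↦ (x ↦ x + 1)`, `z ↦ (x ↦ x + p)`
and `b ↦ (x ↦ w * x + t)`, where `w = 1 - p ^ j` is forced by `⁅a, b⁆ = z ^ p ^ (j - 1)`.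
As `(p ^ j) ^ 2 = 0` in `R`, we get `w ^ p = 1` and
`∑ i < p, w ^ i = p * (1 - C(p, 2) * p ^ (j - 1))`, so `b ^ p = z` can be solved for `t` as soon
as `1 - C(p, 2) * p ^ (j - 1)` is a unit, i.e. as soon as `p ∣ C(p, 2) * p ^ (j - 1)`. This fails
only for `p = 2`, `j = 1`, where the quaternion group `Q₈` satisfies the relations with `a` of
order `4`.
-/

open Finset commutatorElement

lemma commutatorElement_eq_iff_mul_eq {G : Type*} [Group G] {g h c : G} :
    ⁅g, h⁆ = c ↔ g * h = c * (h * g) := by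
  rw [commutatorElement_def, mul_assoc, ← mul_inv_rev, mul_inv_eq_iff_eq_mul]

lemma dvd_choose_two_mul_pow_pred {p j : ℕ} (hp : p.Prime) (h : 2 < p ∨ 2 ≤ j) :
    p ∣ p.choose 2 * p ^ (j - 1) := by
  rcases h with hp2 | hj
  · exact dvd_mul_of_dvd_left (hp.dvd_choose_self two_ne_zero hp2) _
  · exact dvd_mul_of_dvd_right (dvd_pow_self p (by omega)) _

section SqZero

variable {R : Type*} [CommRing R] {q : R}

lemma one_sub_pow_of_sq_eq_zero (hq : q ^ 2 = 0) (k : ℕ) : (1 - q) ^ k = 1 - k * q := by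
  induction k with
  | zero => simp
  | succ k ih =>
    rw [pow_succ, ih]
    push_cast
    linear_combination (k : R) * hq

lemma geom_sum_one_sub_of_sq_eq_zero (hq : q ^ 2 = 0) (k : ℕ) :
    ∑ i ∈ range k, (1 - q) ^ i = k - k.choose 2 * q := by
  induction k with
  | zero => simp
  | succ k ih =>
    rw [sum_range_succ, ih, one_sub_pow_of_sq_eq_zero hq, Nat.choose_succ_succ',
      Nat.choose_one_right]
    push_cast
    ring

end SqZero

def NGen.elim {H : Type*} (z a b : H) : NGen → H
  | .z => z
  | .a => a
  | .b => b

structure NRelations {H : Type*} [Group H] (p j : ℕ) (z a b : H) : Prop where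
  commute_z_a : ⁅z, a⁆ = 1
  commute_z_b : ⁅z, b⁆ = 1
  commutator_a_b : ⁅a, b⁆ = z ^ p ^ (j - 1)
  pow_z : z ^ p ^ j = 1
  pow_a : a ^ p = z
  pow_b : b ^ p = z

namespace NRelations

variable {H : Type*} [Group H] {p j : ℕ} {z a b : H}

lemma iff_lift_elim_eq_one :
    NRelations p j z a b ↔ ∀ r ∈ Nrels p j, FreeGroup.lift (NGen.elim z a b) r = 1 := by
  simp only [Nrels, Set.mem_insert_iff, Set.mem_singleton_iff, forall_eq_or_imp, forall_eq,
    map_mul, map_pow, map_inv, map_commutatorElement, FreeGroup.lift_apply_of, NGen.elim,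
    mul_inv_eq_one]
  exact ⟨fun ⟨h₁, h₂, h₃, h₄, h₅, h₆⟩ ↦ ⟨h₁, h₂, h₃, h₄, h₅, h₆⟩,
    fun ⟨h₁, h₂, h₃, h₄, h₅, h₆⟩ ↦ ⟨h₁, h₂, h₃, h₄, h₅, h₆⟩⟩

lemma of_generators :
    NRelations p j (PresentedGroup.of NGen.z : Ngroup p j) (.of .a) (.of .b) := by
  have hmk : FreeGroup.lift (NGen.elim (.of .z) (.of .a) (.of .b)) =
      PresentedGroup.mk (Nrels p j) :=
    FreeGroup.ext_hom _ _ fun g ↦ by cases g <;> rfl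
  exact iff_lift_elim_eq_one.2 fun r hr ↦ hmk ▸ PresentedGroup.one_of_mem hr

lemma pow_a_eq_one (h : NRelations p j z a b) : a ^ p ^ (j + 1) = 1 := by
  rw [pow_succ', pow_mul, h.pow_a, h.pow_z]

lemma orderOf_dvd_orderOf_of_a (h : NRelations p j z a b) :
    orderOf a ∣ orderOf (PresentedGroup.of NGen.a : Ngroup p j) := by
  simpa [NGen.elim] using
    orderOf_map_dvd (PresentedGroup.toGroup (iff_lift_elim_eq_one.1 h)) (PresentedGroup.of NGen.a)

end NRelations

lemma quaternionGroup_nRelations :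
    NRelations 2 1 (QuaternionGroup.a 2 : QuaternionGroup 2) (.a 1) (.xa 0) := by
  constructor <;> decide

section Affine

variable {R : Type*} [CommRing R]

def affinePerm (u : Rˣ) (t : R) : Equiv.Perm R := (Units.mulLeft u).trans (Equiv.addRight t)

@[simp]
lemma affinePerm_apply (u : Rˣ) (t x : R) : affinePerm u t x = u * x + t := rfl

lemma affinePerm_pow_apply (u : Rˣ) (t x : R) (k : ℕ) :
    (affinePerm u t ^ k) x = u ^ k * x + (∑ i ∈ range k, (u : R) ^ i) * t := by
  induction k with
  | zero => simp
  | succ k ih =>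
    rw [pow_succ', Equiv.Perm.mul_apply, ih, affinePerm_apply, geom_sum_succ]
    ring

lemma affinePerm_one_pow_apply (c x : R) (k : ℕ) : (affinePerm 1 c ^ k) x = x + k * c := by
  simp [affinePerm_pow_apply]

lemma orderOf_affinePerm_one (c : R) : orderOf (affinePerm 1 c) = addOrderOf c := by
  rw [← orderOf_ofAdd_eq_addOrderOf, orderOf_eq_orderOf_iff]
  intro k
  rw [← ofAdd_nsmul, ofAdd_eq_one, Equiv.Perm.ext_iff]
  simp only [affinePerm_one_pow_apply, Equiv.Perm.coe_one, id_eq, add_eq_left, nsmul_eq_mul]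
  exact ⟨fun h ↦ by simpa using h 0, fun h _ ↦ h⟩

end Affine

section Model

variable {p j : ℕ}

lemma natCast_pow_succ_eq_zero (p j : ℕ) : (p : ZMod (p ^ (j + 1))) ^ (j + 1) = 0 := by
  exact_mod_cast ZMod.natCast_self _

lemma sq_natCast_pow_eq_zero (hj : 1 ≤ j) : ((p : ZMod (p ^ (j + 1))) ^ j) ^ 2 = 0 := by
  rw [← pow_mul]
  exact pow_eq_zero_of_le (by omega) (natCast_pow_succ_eq_zero p j)

lemma one_sub_natCast_pow_pow_eq_one (hj : 1 ≤ j) :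
    (1 - (p : ZMod (p ^ (j + 1))) ^ j) ^ p = 1 := by
  rw [one_sub_pow_of_sq_eq_zero (sq_natCast_pow_eq_zero hj), ← pow_succ',
    natCast_pow_succ_eq_zero, sub_zero]

lemma nRelations_affinePerm (hj : 1 ≤ j) {u : (ZMod (p ^ (j + 1)))ˣ}
    (hu : (u : ZMod (p ^ (j + 1))) = 1 - p ^ j) {t : ZMod (p ^ (j + 1))}
    (ht : (∑ i ∈ range p, (u : ZMod (p ^ (j + 1))) ^ i) * t = p) :
    NRelations p j (affinePerm 1 (p : ZMod (p ^ (j + 1)))) (affinePerm 1 1) (affinePerm u t) := by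
  have hpq : (p : ZMod (p ^ (j + 1))) * p ^ j = 0 := by
    rw [← pow_succ', natCast_pow_succ_eq_zero]
  refine ⟨?_, ?_, ?_, ?_, ?_, ?_⟩
  · rw [commutatorElement_eq_one_iff_mul_comm]
    ext x
    simp only [Equiv.Perm.mul_apply, affinePerm_apply, Units.val_one]
    ring
  · rw [commutatorElement_eq_one_iff_mul_comm]
    ext x
    simp only [Equiv.Perm.mul_apply, affinePerm_apply, Units.val_one, hu]
    linear_combination hpq
  · rw [commutatorElement_eq_iff_mul_eq]
    ext x
    simp only [Equiv.Perm.mul_apply, affinePerm_apply, affinePerm_one_pow_apply, Units.val_one,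
      hu]
    rw [← pow_sub_one_mul (by omega : j ≠ 0)]
    push_cast
    ring
  · ext x
    simp [affinePerm_one_pow_apply, hpq, mul_comm]
  · ext x
    simp [affinePerm_one_pow_apply]
  · ext x
    rw [affinePerm_pow_apply, ht, hu, one_sub_natCast_pow_pow_eq_one hj]
    simp

lemma exists_nRelations_affinePerm (hp : p.Prime) (hj : 1 ≤ j) (h : 2 < p ∨ 2 ≤ j) :
    ∃ (u : (ZMod (p ^ (j + 1)))ˣ) (t : ZMod (p ^ (j + 1))),
      NRelations p j (affinePerm 1 (p : ZMod (p ^ (j + 1)))) (affinePerm 1 1) (affinePerm u t) := by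
  obtain ⟨x, hx⟩ := dvd_choose_two_mul_pow_pred hp h
  have hv : IsUnit (1 - p * x : ZMod (p ^ (j + 1))) :=
    ((Commute.all _ _).isNilpotent_mul_right ⟨_, natCast_pow_succ_eq_zero p j⟩).isUnit_one_sub
  refine ⟨.ofPowEqOne _ p (one_sub_natCast_pow_pow_eq_one hj) hp.ne_zero, ↑hv.unit⁻¹,
    nRelations_affinePerm hj rfl ?_⟩
  have hsum : ∑ i ∈ range p, (1 - (p : ZMod (p ^ (j + 1))) ^ j) ^ i = p * (1 - p * x) := by
    rw [geom_sum_one_sub_of_sq_eq_zero (sq_natCast_pow_eq_zero hj),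
      ← pow_sub_one_mul (by omega : j ≠ 0)]
    have hx' : (p.choose 2 : ZMod (p ^ (j + 1))) * p ^ (j - 1) = p * x := by
      simpa using congrArg (Nat.cast : ℕ → ZMod (p ^ (j + 1))) hx
    linear_combination (-p : ZMod (p ^ (j + 1))) * hx'
  simp only [Units.val_ofPowEqOne, hsum, mul_assoc, hv.mul_val_inv, mul_one]

end Model

theorem stmt_10 (p j : ℕ) (hp : p.Prime) (hj : 1 ≤ j) :
    ∃ x : Ngroup p j, orderOf x = p ^ (j + 1) := by
  refine ⟨PresentedGroup.of NGen.a,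
    orderOf_dvd_of_pow_eq_one NRelations.of_generators.pow_a_eq_one |>.antisymm ?_⟩
  by_cases hQ : p = 2 ∧ j = 1
  · obtain ⟨rfl, rfl⟩ := hQ
    simpa [QuaternionGroup.orderOf_a_one] using quaternionGroup_nRelations.orderOf_dvd_orderOf_of_a
  · obtain ⟨u, t, h⟩ := exists_nRelations_affinePerm hp hj (by have := hp.two_le; omega)
    simpa [orderOf_affinePerm_one] using h.orderOf_dvd_orderOf_of_a
end

section
/- Let p be a prime with p^j ≠ 2. The group M(p^j) defined by ⟨z, a, b | [z,a]=[z,b]=1, [a,b]=z^{p^{j-1}}, z^{p^j}=a^p=b^p=1⟩ has exponent dividing p^j, i.e. x^{p^j} = 1 for all x ∈ M(p^j). -/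
inductive MGen | z | a | b

open FreeGroup commutatorElement in
def Mrels (p j : ℕ) : Set (FreeGroup MGen) :=
  { ⁅of MGen.z, of MGen.a⁆, ⁅of MGen.z, of MGen.b⁆,
    ⁅of MGen.a, of MGen.b⁆ * (of MGen.z ^ (p ^ (j - 1)))⁻¹,
    of MGen.z ^ (p ^ j), of MGen.a ^ p, of MGen.b ^ p }

/-- The group M(p^j). -/
abbrev Mgroup (p j : ℕ) := PresentedGroup (Mrels p j)

/-! The relations make `z` central and `⁅a, b⁆ = z ^ p ^ (j - 1)`, so `M(p^j)` has nilpotency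
class at most two and its derived subgroup is generated by a central element of order dividing
`p`. In a group of class two, `(x * y) ^ n = x ^ n * y ^ n * ⁅y, x⁆ ^ (n.choose 2)`, and `p` divides
`(p ^ j).choose 2` precisely because `p ^ j ≠ 2`. Hence the elements with `x ^ p ^ j = 1` form a
subgroup, and it contains the generators. -/

open Subgroup
open scoped commutatorElement

section ClassTwo

variable {G : Type*} [Group G]

theorem pow_mul_eq_commutatorElement_pow_mul {x y : G} (hy : Commute y ⁅y, x⁆) (n : ℕ) :
    y ^ n * x = ⁅y, x⁆ ^ n * x * y ^ n := by
  have hyx : y * x = ⁅y, x⁆ * x * y := by simp [commutatorElement_def, mul_assoc]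
  induction n with
  | zero => simp
  | succ n ih =>
    calc y ^ (n + 1) * x = y ^ n * ⁅y, x⁆ * x * y := by
          rw [pow_succ, mul_assoc, hyx]; simp only [mul_assoc]
      _ = ⁅y, x⁆ * (y ^ n * x) * y := by rw [(hy.pow_left n).eq]; simp only [mul_assoc]
      _ = ⁅y, x⁆ ^ (n + 1) * x * y ^ (n + 1) := by
        rw [ih, pow_succ', pow_succ]; simp only [mul_assoc]

theorem mul_pow_of_commute_commutatorElement {x y : G} (hx : Commute x ⁅y, x⁆)
    (hy : Commute y ⁅y, x⁆) (n : ℕ) :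
    (x * y) ^ n = x ^ n * y ^ n * ⁅y, x⁆ ^ n.choose 2 := by
  induction n with
  | zero => simp
  | succ n ih =>
    set c := ⁅y, x⁆
    calc (x * y) ^ (n + 1) = x ^ n * (y ^ n * x) * c ^ n.choose 2 * y := by
          simp only [pow_succ, ih, mul_assoc, (hx.pow_right _).eq]
      _ = x ^ n * x * (c ^ n * y ^ n) * (c ^ n.choose 2 * y) := by
          rw [pow_mul_eq_commutatorElement_pow_mul hy, ← (hx.pow_right n).eq]
          simp only [mul_assoc]
      _ = x ^ (n + 1) * y ^ (n + 1) * c ^ (n + 1).choose 2 := by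
          rw [(hy.pow_pow n n).symm.eq, Nat.choose_succ_succ', Nat.choose_one_right, pow_add c,
            pow_succ x n, pow_succ y n]
          simp only [mul_assoc]
          rw [← mul_assoc (c ^ n), ((hy.pow_right n).mul_right (hy.pow_right _)).symm.eq]

theorem Subgroup.normal_of_le_center_s11 {H : Subgroup G} (hH : H ≤ center G) : H.Normal :=
  ⟨fun h hh g => by rwa [mem_center_iff.mp (hH hh) g, mul_inv_cancel_right]⟩

theorem commutator_le_of_closure_eq_top {S : Set G} (hS : closure S = ⊤) {N : Subgroup G}
    [N.Normal] (hSN : ∀ x ∈ S, ∀ y ∈ S, ⁅x, y⁆ ∈ N) : commutator G ≤ N := by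
  rw [← Normal.quotient_commutative_iff_commutator_le]
  set T := QuotientGroup.mk' N '' S
  have hT : closure T = ⊤ := by
    rw [← MonoidHom.map_closure, hS, ← MonoidHom.range_eq_map, QuotientGroup.range_mk']
  have hTT : T ⊆ centralizer T := by
    rintro _ ⟨x, hx, rfl⟩ _ ⟨y, hy, rfl⟩
    rw [← commutatorElement_eq_one_iff_mul_comm, ← map_commutatorElement, QuotientGroup.mk'_apply,
      QuotientGroup.eq_one_iff]
    exact hSN y hy x hx
  have hcomm : closure T ≤ centralizer (closure T) := by
    rwa [centralizer_closure, closure_le]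
  rw [hT] at hcomm
  exact ⟨⟨fun a b => hcomm (mem_top b) a (mem_top a)⟩⟩

theorem pow_eq_one_of_commutator_le {H : Subgroup G} (hG : commutator G ≤ H) (hH : H ≤ center G)
    {n : ℕ} (hHn : ∀ h ∈ H, h ^ n.choose 2 = 1) {S : Set G} (hS : closure S = ⊤)
    (hSn : ∀ s ∈ S, s ^ n = 1) (x : G) : x ^ n = 1 := by
  have hc : ∀ a b : G, ⁅b, a⁆ ∈ H := fun a b =>
    hG (commutator_mem_commutator (mem_top b) (mem_top a))
  have hx : x ∈ closure S := hS ▸ mem_top x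
  induction hx using closure_induction with
  | mem s hs => exact hSn s hs
  | one => exact one_pow n
  | mul x y _ _ hx hy =>
    rw [mul_pow_of_commute_commutatorElement (mem_center_iff.mp (hH (hc x y)) x)
      (mem_center_iff.mp (hH (hc x y)) y), hx, hy, hHn _ (hc x y), one_mul, one_mul]
  | inv x _ hx => rw [inv_pow, hx, inv_one]

end ClassTwo

theorem PresentedGroup.mk_of {α : Type*} {rels : Set (FreeGroup α)} (x : α) :
    mk rels (FreeGroup.of x) = of x :=
  rfl

namespace Mgroup

open PresentedGroup (of mk_of one_of_mem)

variable {p j : ℕ}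

theorem commute_z_a : Commute (of MGen.z : Mgroup p j) (of MGen.a) :=
  commutatorElement_eq_one_iff_commute.mp <| by
    simpa only [map_commutatorElement, mk_of] using
      one_of_mem (show ⁅FreeGroup.of MGen.z, FreeGroup.of MGen.a⁆ ∈ Mrels p j by simp [Mrels])

theorem commute_z_b : Commute (of MGen.z : Mgroup p j) (of MGen.b) :=
  commutatorElement_eq_one_iff_commute.mp <| by
    simpa only [map_commutatorElement, mk_of] using
      one_of_mem (show ⁅FreeGroup.of MGen.z, FreeGroup.of MGen.b⁆ ∈ Mrels p j by simp [Mrels])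

theorem commutatorElement_a_b :
    ⁅(of MGen.a : Mgroup p j), (of MGen.b : Mgroup p j)⁆ = of MGen.z ^ p ^ (j - 1) :=
  mul_inv_eq_one.mp <| by
    simpa only [map_mul, map_inv, map_pow, map_commutatorElement, mk_of] using
      one_of_mem (show ⁅FreeGroup.of MGen.a, FreeGroup.of MGen.b⁆ *
        (FreeGroup.of MGen.z ^ p ^ (j - 1))⁻¹ ∈ Mrels p j by simp [Mrels])

theorem z_pow : (of MGen.z : Mgroup p j) ^ p ^ j = 1 := by
  simpa only [map_pow, mk_of] using
    one_of_mem (show FreeGroup.of MGen.z ^ p ^ j ∈ Mrels p j by simp [Mrels])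

theorem a_pow : (of MGen.a : Mgroup p j) ^ p = 1 := by
  simpa only [map_pow, mk_of] using
    one_of_mem (show FreeGroup.of MGen.a ^ p ∈ Mrels p j by simp [Mrels])

theorem b_pow : (of MGen.b : Mgroup p j) ^ p = 1 := by
  simpa only [map_pow, mk_of] using
    one_of_mem (show FreeGroup.of MGen.b ^ p ∈ Mrels p j by simp [Mrels])

theorem z_mem_center : (of MGen.z : Mgroup p j) ∈ center (Mgroup p j) := by
  rw [center_eq_iInf (PresentedGroup.closure_range_of _)]
  simp only [mem_iInf, Set.mem_range, forall_exists_index, forall_apply_eq_imp_iff,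
    mem_centralizer_singleton_iff]
  rintro (_ | _ | _)
  exacts [rfl, commute_z_a, commute_z_b]

theorem commutator_le_zpowers :
    commutator (Mgroup p j) ≤ zpowers ((of MGen.z : Mgroup p j) ^ p ^ (j - 1)) := by
  have : (zpowers ((of MGen.z : Mgroup p j) ^ p ^ (j - 1))).Normal :=
    normal_of_le_center_s11 (zpowers_le.mpr (pow_mem z_mem_center _))
  refine commutator_le_of_closure_eq_top (PresentedGroup.closure_range_of _) ?_
  rintro _ ⟨g, rfl⟩ _ ⟨h, rfl⟩
  have hza := commutatorElement_eq_one_iff_commute.mpr (commute_z_a (p := p) (j := j))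
  have hzb := commutatorElement_eq_one_iff_commute.mpr (commute_z_b (p := p) (j := j))
  have hab : ⁅(of MGen.a : Mgroup p j), (of MGen.b : Mgroup p j)⁆ ∈
      zpowers ((of MGen.z : Mgroup p j) ^ p ^ (j - 1)) := by
    rw [commutatorElement_a_b]; exact mem_zpowers _
  cases g <;> cases h <;> first
    | simp only [commutatorElement_self, hza, hzb, hab, one_mem]
    | rw [← commutatorElement_inv]; simp only [hza, hzb, hab, inv_one, one_mem, inv_mem_iff]

theorem of_pow_prime_pow (hj : 1 ≤ j) (g : MGen) : (of g : Mgroup p j) ^ p ^ j = 1 := by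
  obtain ⟨k, hk⟩ := dvd_pow_self p (Nat.one_le_iff_ne_zero.mp hj)
  cases g
  · exact z_pow
  · rw [hk, pow_mul, a_pow, one_pow]
  · rw [hk, pow_mul, b_pow, one_pow]

theorem pow_eq_one_of_mem_zpowers (hj : 1 ≤ j) {c : Mgroup p j}
    (hc : c ∈ zpowers ((of MGen.z : Mgroup p j) ^ p ^ (j - 1))) : c ^ p = 1 := by
  obtain ⟨k, rfl⟩ := mem_zpowers_iff.mp hc
  rw [← zpow_natCast, ← zpow_mul, mul_comm, zpow_mul, zpow_natCast, ← pow_mul, ← pow_succ,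
    Nat.sub_add_cancel hj, z_pow, one_zpow]

end Mgroup

theorem stmt_11 (p j : ℕ) (hp : p.Prime) (hj : 1 ≤ j) (hne : p ^ j ≠ 2) :
    ∀ x : Mgroup p j, x ^ (p ^ j) = 1 := by
  obtain ⟨m, hm⟩ := hp.dvd_choose_pow two_ne_zero hne.symm
  refine pow_eq_one_of_commutator_le Mgroup.commutator_le_zpowers
    (zpowers_le.mpr (pow_mem Mgroup.z_mem_center _)) (fun c hc => ?_)
    (PresentedGroup.closure_range_of _) ?_
  · rw [hm, pow_mul, Mgroup.pow_eq_one_of_mem_zpowers hj hc, one_pow]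
  · rintro _ ⟨g, rfl⟩
    exact Mgroup.of_pow_prime_pow hj g
end

section
/- Let G be a finite group with generators σ, a_1, b_1, …, a_g, b_g (g ≥ 1) satisfying: σ commutes with every a_r and b_r; a_s, a_r, b_s, b_r pairwise commute for s ≠ r; and [a_r, b_r] = σ^2 for all r. Then the commutator subgroup of G is generated by σ^2 and is contained in the center of G; in particular if σ^2 ≠ 1 then G is 2-step nilpotent. -/
/-!
The relations make `σ` commute with every generator, so `σ` is central, and they make the
commutator of any two generators a power of `σ ^ 2`. Modulo the central, hence normal, subgroup
`⟨σ ^ 2⟩` the generators therefore commute, so the quotient is abelian and `[G, G] ≤ ⟨σ ^ 2⟩`;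
conversely `σ ^ 2 = ⁅a 0, b 0⁆` is a commutator.
-/

open scoped commutatorElement

namespace Subgroup

variable {G : Type*} [Group G]

theorem normal_of_le_center_s13 {H : Subgroup G} (hH : H ≤ center G) : H.Normal where
  conj_mem n hn g := by
    rwa [mem_center_iff.mp (hH hn) g, mul_inv_cancel_right]

theorem mem_center_of_forall_commute_of_closure_eq_top {S : Set G} (hS : closure S = ⊤) {x : G}
    (hx : ∀ s ∈ S, Commute x s) : x ∈ center G := by
  rw [← centralizer_univ, ← coe_top, ← hS, centralizer_closure]
  exact fun s hs => (hx s hs).symm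

theorem isMulCommutative_of_closure_eq_top {S : Set G} (hS : closure S = ⊤)
    (hcomm : ∀ s ∈ S, ∀ t ∈ S, Commute s t) : IsMulCommutative G := by
  have hcenter : S ⊆ center G := fun s hs =>
    mem_center_of_forall_commute_of_closure_eq_top hS (hcomm s hs)
  rw [← center_eq_top_iff, eq_top_iff, ← hS]
  exact closure_le _ |>.mpr hcenter

theorem commutator_le_of_closure_eq_top {S : Set G} (hS : closure S = ⊤) {N : Subgroup G}
    [N.Normal] (hN : ∀ s ∈ S, ∀ t ∈ S, ⁅s, t⁆ ∈ N) : _root_.commutator G ≤ N := by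
  refine Normal.quotient_commutative_iff_commutator_le.mp ?_
  have hS' : closure (QuotientGroup.mk' N '' S) = ⊤ := by
    rw [← MonoidHom.map_closure, hS, ← MonoidHom.range_eq_map,
      MonoidHom.range_eq_top.mpr (QuotientGroup.mk'_surjective N)]
  refine isMulCommutative_of_closure_eq_top hS' ?_
  rintro _ ⟨s, hs, rfl⟩ _ ⟨t, ht, rfl⟩
  rw [← commutatorElement_eq_one_iff_commute, ← map_commutatorElement, QuotientGroup.mk'_apply,
    QuotientGroup.eq_one_iff]
  exact hN s hs t ht

end Subgroup

theorem Commute.commutatorElement_mem {G : Type*} [Group G] {x y : G} (h : Commute x y)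
    (H : Subgroup G) : ⁅x, y⁆ ∈ H := by
  rw [commutatorElement_eq_one_iff_commute.mpr h]
  exact H.one_mem

theorem commutatorElement_mem_comm {G : Type*} [Group G] {H : Subgroup G} {x y : G} :
    ⁅x, y⁆ ∈ H ↔ ⁅y, x⁆ ∈ H := by
  rw [← commutatorElement_inv, inv_mem_iff]

theorem stmt_13_general {G : Type*} [Group G] (g : ℕ) (hg : 1 ≤ g)
    (σ : G) (a b : Fin g → G)
    (hgen : Subgroup.closure ({σ} ∪ Set.range a ∪ Set.range b) = ⊤)
    (hσa : ∀ r, Commute σ (a r)) (hσb : ∀ r, Commute σ (b r))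
    (haa : ∀ r s, Commute (a r) (a s))
    (hbb : ∀ r s, Commute (b r) (b s))
    (hab : ∀ r s, r ≠ s → Commute (a r) (b s))
    (hrel : ∀ r, ⁅a r, b r⁆ = σ ^ 2) :
    commutator G = Subgroup.zpowers (σ ^ 2) ∧
    commutator G ≤ Subgroup.center G ∧
    (σ ^ 2 ≠ 1 → commutator G ≠ ⊥ ∧ commutator G ≤ Subgroup.center G) := by
  set N := Subgroup.zpowers (σ ^ 2)
  have hσ : σ ∈ Subgroup.center G := by
    refine Subgroup.mem_center_of_forall_commute_of_closure_eq_top hgen ?_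
    rintro s ((rfl | ⟨r, rfl⟩) | ⟨r, rfl⟩)
    exacts [Commute.refl _, hσa r, hσb r]
  have hNcenter : N ≤ Subgroup.center G := Subgroup.zpowers_le.mpr (pow_mem hσ 2)
  have hNnormal : N.Normal := Subgroup.normal_of_le_center_s13 hNcenter
  have hσN (x : G) : ⁅σ, x⁆ ∈ N :=
    (Commute.symm (Subgroup.mem_center_iff.mp hσ x)).commutatorElement_mem N
  have hab_mem (r s : Fin g) : ⁅a r, b s⁆ ∈ N := by
    obtain rfl | hrs := eq_or_ne r s
    · exact hrel r ▸ Subgroup.mem_zpowers _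
    · exact (hab r s hrs).commutatorElement_mem N
  have hgens : ∀ s ∈ {σ} ∪ Set.range a ∪ Set.range b, ∀ t ∈ {σ} ∪ Set.range a ∪ Set.range b,
      ⁅s, t⁆ ∈ N := by
    rintro _ ((rfl | ⟨r, rfl⟩) | ⟨r, rfl⟩) _ ((rfl | ⟨s, rfl⟩) | ⟨s, rfl⟩)
    exacts [hσN _, hσN _, hσN _,
      commutatorElement_mem_comm.mp (hσN _), (haa r s).commutatorElement_mem N, hab_mem r s,
      commutatorElement_mem_comm.mp (hσN _), commutatorElement_mem_comm.mp (hab_mem s r),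
      (hbb r s).commutatorElement_mem N]
  have heq : commutator G = N := by
    refine le_antisymm (Subgroup.commutator_le_of_closure_eq_top hgen hgens) ?_
    rw [Subgroup.zpowers_le, ← hrel ⟨0, hg⟩]
    exact Subgroup.commutator_mem_commutator (Subgroup.mem_top _) (Subgroup.mem_top _)
  refine ⟨heq, heq ▸ hNcenter, fun hσ2 => ⟨?_, heq ▸ hNcenter⟩⟩
  rwa [heq, Ne, Subgroup.zpowers_eq_bot]

theorem stmt_13 {G : Type*} [Group G] [Finite G] (g : ℕ) (hg : 1 ≤ g)
    (σ : G) (a b : Fin g → G)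
    (hgen : Subgroup.closure ({σ} ∪ Set.range a ∪ Set.range b) = ⊤)
    (hσa : ∀ r, Commute σ (a r)) (hσb : ∀ r, Commute σ (b r))
    (haa : ∀ r s, Commute (a r) (a s))
    (hbb : ∀ r s, Commute (b r) (b s))
    (hab : ∀ r s, r ≠ s → Commute (a r) (b s))
    (hrel : ∀ r, ⁅a r, b r⁆ = σ ^ 2) :
    commutator G = Subgroup.zpowers (σ ^ 2) ∧
    commutator G ≤ Subgroup.center G ∧
    (σ ^ 2 ≠ 1 → commutator G ≠ ⊥ ∧ commutator G ≤ Subgroup.center G) :=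
  stmt_13_general g hg σ a b hgen hσa hσb haa hbb hab hrel
end
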